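/- Let N be a complete nest and M a weakly closed subspace of B(H). The map φ(P) = ⋁{Q ∈ N : ∃ R ∈ N, R < P, Q B(H) R^⊥ ⊆ M} is left order continuous: for every subset X of N, φ(⋁X) = ⋁ φ(X) (with the convention that the supremum of the empty set is 0). -/

import Mathlib

/-- The order on orthogonal projections: `P ≤ Q` encoded as `P*Q = P ∧ Q*P = P`. -/
def opLe {H : Type} [NormedAddCommGroup H] [InnerProductSpace ℂ H]
    (P Q : H →L[ℂ] H) : Prop := P * Q = P ∧ Q * P = P

/-- Strict order on projections. -/
def opLt {H : Type} [NormedAddCommGroup H] [InnerProductSpace ℂ H]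
    (P Q : H →L[ℂ] H) : Prop := opLe P Q ∧ P ≠ Q

/-- A complete nest: a totally ordered complete sublattice of the lattice of orthogonal
projections on `H`, containing `0` and `1`.  Completeness means that every subset has a
least upper bound and a greatest lower bound (computed in the full projection lattice)
belonging to the nest. -/
structure IsNest {H : Type} [NormedAddCommGroup H] [InnerProductSpace ℂ H] [CompleteSpace H]
    (N : Set (H →L[ℂ] H)) : Prop where
  proj : ∀ P ∈ N, IsSelfAdjoint P ∧ IsIdempotentElem P
  zero_mem : (0 : H →L[ℂ] H) ∈ N
  one_mem : (1 : H →L[ℂ] H) ∈ N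
  total : ∀ P ∈ N, ∀ Q ∈ N, opLe P Q ∨ opLe Q P
  complete_sup : ∀ S ⊆ N, ∃ B ∈ N, (∀ P ∈ S, opLe P B) ∧
    ∀ C : H →L[ℂ] H, IsSelfAdjoint C → IsIdempotentElem C → (∀ P ∈ S, opLe P C) → opLe B C
  complete_inf : ∀ S ⊆ N, ∃ B ∈ N, (∀ P ∈ S, opLe B P) ∧
    ∀ C : H →L[ℂ] H, IsSelfAdjoint C → IsIdempotentElem C → (∀ P ∈ S, opLe C P) → opLe C B

/-- `B` is the supremum, taken in the nest `N`, of the subset `S` of `N`. -/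
def IsNestSup {H : Type} [NormedAddCommGroup H] [InnerProductSpace ℂ H]
    (N S : Set (H →L[ℂ] H)) (B : H →L[ℂ] H) : Prop :=
  B ∈ N ∧ (∀ P ∈ S, opLe P B) ∧ ∀ C ∈ N, (∀ P ∈ S, opLe P C) → opLe B C

/-- `B` is the infimum, taken in the nest `N`, of the subset `S` of `N`. -/
def IsNestInf {H : Type} [NormedAddCommGroup H] [InnerProductSpace ℂ H]
    (N S : Set (H →L[ℂ] H)) (B : H →L[ℂ] H) : Prop :=
  B ∈ N ∧ (∀ P ∈ S, opLe B P) ∧ ∀ C ∈ N, (∀ P ∈ S, opLe C P) → opLe C B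

/-- The nest algebra `T(N)` of a nest `N`: all `T` with `P^⊥ T P = 0` for all `P ∈ N`. -/
def nestAlg {H : Type} [NormedAddCommGroup H] [InnerProductSpace ℂ H]
    (N : Set (H →L[ℂ] H)) : Set (H →L[ℂ] H) :=
  {T | ∀ P ∈ N, (1 - P) * T * P = 0}

/-- A subset of `B(H)` is weakly closed if it is closed in the weak operator topology. -/
def WClosed {H : Type} [NormedAddCommGroup H] [InnerProductSpace ℂ H] [CompleteSpace H]
    (M : Set (H →L[ℂ] H)) : Prop :=
  IsClosed ((ContinuousLinearMapWOT.ofCLM : (H →L[ℂ] H) → H →WOT[ℂ] H) '' M)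

/-- The closure of a subset of `B(H)` in the weak operator topology. -/
def wClosure {H : Type} [NormedAddCommGroup H] [InnerProductSpace ℂ H] [CompleteSpace H]
    (S : Set (H →L[ℂ] H)) : Set (H →L[ℂ] H) :=
  (ContinuousLinearMapWOT.ofCLM : (H →L[ℂ] H) → H →WOT[ℂ] H) ⁻¹' (closure ((ContinuousLinearMapWOT.ofCLM : (H →L[ℂ] H) → H →WOT[ℂ] H) '' S))

/-- The rank-one operator `x ⊗ y : z ↦ ⟨z,x⟩y` (inner product linear in its first variable,
i.e. `⟨z,x⟩ = ⟪x,z⟫` in Mathlib's convention). -/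
noncomputable def rankOne {H : Type} [NormedAddCommGroup H] [InnerProductSpace ℂ H]
    (x y : H) : H →L[ℂ] H :=
  (innerSL ℂ x).smulRight y
/-- The set `{Q ∈ N : ∃ R ∈ N, R < P, Q B(H) R^⊥ ⊆ M}` whose supremum defines `φ(P)`. -/
def phiSet {H : Type} [NormedAddCommGroup H] [InnerProductSpace ℂ H] [CompleteSpace H]
    (N : Set (H →L[ℂ] H)) (M : Submodule ℂ (H →L[ℂ] H)) (P : H →L[ℂ] H) :
    Set (H →L[ℂ] H) :=
  {Q | Q ∈ N ∧ ∃ R ∈ N, opLt R P ∧ ∀ A : H →L[ℂ] H, Q * A * (1 - R) ∈ M}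

/-!
`φ` is monotone because `phiSet` is, which gives `⋁ φ(X) ≤ φ(⋁X)`. Conversely, by totality of the
nest every `R < ⋁X` lies strictly below some `P ∈ X`, so `phiSet (⋁X) ⊆ ⋃_{P ∈ X} phiSet P` and
each of its members lies below some `φ P ≤ ⋁ φ(X)`.
-/

namespace opLe

variable {H : Type} [NormedAddCommGroup H] [InnerProductSpace ℂ H] {P Q R : H →L[ℂ] H}

lemma of_isIdempotentElem (hP : IsIdempotentElem P) : opLe P P := ⟨hP, hP⟩

lemma trans (hPQ : opLe P Q) (hQR : opLe Q R) : opLe P R := by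
  constructor
  · calc P * R = P * Q * R := by rw [hPQ.1]
      _ = P * (Q * R) := mul_assoc P Q R
      _ = P := by rw [hQR.1, hPQ.1]
  · calc R * P = R * (Q * P) := by rw [hPQ.2]
      _ = R * Q * P := (mul_assoc R Q P).symm
      _ = P := by rw [hQR.2, hPQ.2]

lemma antisymm (hPQ : opLe P Q) (hQP : opLe Q P) : P = Q :=
  hPQ.2.symm.trans hQP.1

end opLe

lemma opLt.trans_opLe {H : Type} [NormedAddCommGroup H] [InnerProductSpace ℂ H]
    {P Q R : H →L[ℂ] H} (hRP : opLt R P) (hPQ : opLe P Q) : opLt R Q := by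
  refine ⟨hRP.1.trans hPQ, ?_⟩
  rintro rfl
  exact hRP.2 (hRP.1.antisymm hPQ)

section Nest

variable {H : Type} [NormedAddCommGroup H] [InnerProductSpace ℂ H] [CompleteSpace H]
  {N : Set (H →L[ℂ] H)}

lemma IsNest.exists_opLt_of_opLt_isNestSup (hN : IsNest N) {X : Set (H →L[ℂ] H)} (hX : X ⊆ N)
    {s R : H →L[ℂ] H} (hs : IsNestSup N X s) (hR : R ∈ N) (hRs : opLt R s) :
    ∃ P ∈ X, opLt R P := by
  obtain ⟨P, hPX, hPR⟩ : ∃ P ∈ X, ¬ opLe P R := by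
    by_contra! h
    exact hRs.2 (hRs.1.antisymm (hs.2.2 R hR h))
  refine ⟨P, hPX, (hN.total P (hX hPX) R hR).resolve_left hPR, ?_⟩
  rintro rfl
  exact hPR (opLe.of_isIdempotentElem (hN.proj R hR).2)

variable (M : Submodule ℂ (H →L[ℂ] H))

lemma phiSet_mono {P Q : H →L[ℂ] H} (hPQ : opLe P Q) : phiSet N M P ⊆ phiSet N M Q := by
  rintro A ⟨hAN, R, hRN, hRP, hAR⟩
  exact ⟨hAN, R, hRN, hRP.trans_opLe hPQ, hAR⟩

lemma IsNest.phiSet_subset_biUnion_of_isNestSup (hN : IsNest N) {X : Set (H →L[ℂ] H)}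
    (hX : X ⊆ N) {s : H →L[ℂ] H} (hs : IsNestSup N X s) :
    phiSet N M s ⊆ ⋃ P ∈ X, phiSet N M P := by
  rintro A ⟨hAN, R, hRN, hRs, hAR⟩
  obtain ⟨P, hPX, hRP⟩ := hN.exists_opLt_of_opLt_isNestSup hX hs hRN hRs
  exact Set.mem_biUnion hPX ⟨hAN, R, hRN, hRP, hAR⟩

lemma opLe_phi_of_opLe {φ : (H →L[ℂ] H) → (H →L[ℂ] H)}
    (hφ : ∀ P ∈ N, IsNestSup N (phiSet N M P) (φ P)) {P Q : H →L[ℂ] H} (hP : P ∈ N)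
    (hQ : Q ∈ N) (hPQ : opLe P Q) : opLe (φ P) (φ Q) :=
  (hφ P hP).2.2 _ (hφ Q hQ).1 fun A hA => (hφ Q hQ).2.1 A (phiSet_mono M hPQ hA)

end Nest

theorem phi_left_order_continuous_general
    {H : Type} [NormedAddCommGroup H] [InnerProductSpace ℂ H] [CompleteSpace H]
    (N : Set (H →L[ℂ] H)) (hN : IsNest N) (M : Submodule ℂ (H →L[ℂ] H))
    (φ : (H →L[ℂ] H) → (H →L[ℂ] H))
    (hφ : ∀ P ∈ N, IsNestSup N (phiSet N M P) (φ P))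
    (X : Set (H →L[ℂ] H)) (hX : X ⊆ N)
    (sX sφ : H →L[ℂ] H)
    (hsX : IsNestSup N X sX) (hsφ : IsNestSup N (φ '' X) sφ) :
    φ sX = sφ := by
  have hφsX := hφ sX hsX.1
  refine opLe.antisymm ?_ ?_
  · refine hφsX.2.2 sφ hsφ.1 fun Q hQ => ?_
    obtain ⟨P, hPX, hQP⟩ := Set.mem_iUnion₂.mp (hN.phiSet_subset_biUnion_of_isNestSup M hX hsX hQ)
    exact ((hφ P (hX hPX)).2.1 Q hQP).trans (hsφ.2.1 _ ⟨P, hPX, rfl⟩)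
  · refine hsφ.2.2 _ hφsX.1 ?_
    rintro _ ⟨P, hPX, rfl⟩
    exact opLe_phi_of_opLe M hφ (hX hPX) hsX.1 (hsX.2.1 P hPX)

/-- The map `φ` is left order continuous: for every subset `X` of `N`,
`φ(⋁X) = ⋁φ(X)` (suprema taken in the complete lattice `N`). -/
theorem phi_left_order_continuous
    {H : Type} [NormedAddCommGroup H] [InnerProductSpace ℂ H] [CompleteSpace H]
    (N : Set (H →L[ℂ] H)) (hN : IsNest N) (M : Submodule ℂ (H →L[ℂ] H))
    (hM : WClosed (M : Set (H →L[ℂ] H)))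
    (φ : (H →L[ℂ] H) → (H →L[ℂ] H))
    (hφ : ∀ P ∈ N, IsNestSup N (phiSet N M P) (φ P))
    (X : Set (H →L[ℂ] H)) (hX : X ⊆ N)
    (sX sφ : H →L[ℂ] H)
    (hsX : IsNestSup N X sX) (hsφ : IsNestSup N (φ '' X) sφ) :
    φ sX = sφ :=
  phi_left_order_continuous_general N hN M φ hφ X hX sX sφ hsX hsφ
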